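/- arXiv:0810.1539 — 2 statements merged into one kernel-verified Lean document; each statement's English description precedes it below -/
import Mathlib

section
/- Let Δ be a (d−1)-dimensional simplicial complex with d ≥ 2 that is pure and such that lk_Δ F is connected for every face F ∈ Δ with 0 ≤ |F| < d−1 (including the empty face). Then Δ is strongly connected: for any two facets F and F′ of Δ there is a chain of facets F = F_0, F_1, …, F_m = F′ such that |F_i ∩ F_{i+1}| = d−1 for all 0 ≤ i ≤ m−1. -/
/-- `Δ` is an (abstract) simplicial complex on the (finite) vertex set `V`:
faces are closed under taking subsets and every singleton is a face. -/
def IsComplex {V : Type*} [DecidableEq V] (Δ : Set (Finset V)) : Prop :=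
  (∀ F ∈ Δ, ∀ G, G ⊆ F → G ∈ Δ) ∧ ∀ v : V, ({v} : Finset V) ∈ Δ

/-- `F` is a facet (maximal face) of the collection of faces `Δ`. -/
def IsFacet {V : Type*} (Δ : Set (Finset V)) (F : Finset V) : Prop :=
  F ∈ Δ ∧ ∀ G ∈ Δ, F ⊆ G → G = F

/-- Every facet has `d` vertices, i.e. dimension `d - 1`. -/
def IsPure {V : Type*} (Δ : Set (Finset V)) (d : ℕ) : Prop :=
  ∀ F, IsFacet Δ F → F.card = d

/-- `Δ` has dimension `d - 1`: all faces have at most `d` vertices and some face has `d`. -/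
def HasDim {V : Type*} (Δ : Set (Finset V)) (d : ℕ) : Prop :=
  (∀ F ∈ Δ, F.card ≤ d) ∧ ∃ F ∈ Δ, F.card = d

/-- The link of the face `F`. -/
def link {V : Type*} [DecidableEq V] (Δ : Set (Finset V)) (F : Finset V) : Set (Finset V) :=
  {G | G ∈ Δ ∧ Disjoint F G ∧ F ∪ G ∈ Δ}

/-- The closed star of the face `F`. -/
def closedStar {V : Type*} [DecidableEq V] (Δ : Set (Finset V)) (F : Finset V) :
    Set (Finset V) :=
  {G | G ∈ Δ ∧ F ∪ G ∈ Δ}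

/-- The collection of faces `K` is connected: any two of its vertices are joined by a
walk along its `1`-dimensional faces. -/
def Conn {V : Type*} [DecidableEq V] (K : Set (Finset V)) : Prop :=
  ∀ v w : V, ({v} : Finset V) ∈ K → ({w} : Finset V) ∈ K →
    Relation.ReflTransGen (fun a b => ({a, b} : Finset V) ∈ K) v w

/-- Property (III): the link of every face with fewer than `d - 1` vertices
(including the empty face) is connected. -/
def LinksConn {V : Type*} [DecidableEq V] (Δ : Set (Finset V)) (d : ℕ) : Prop :=
  ∀ F ∈ Δ, F.card < d - 1 → Conn (link Δ F)

/-- Property (II): `Δ` is balanced with respect to the coloring `κ`: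
the coloring is injective on every face. -/
def IsBalanced {V : Type*} {d : ℕ} (Δ : Set (Finset V)) (κ : V → Fin d) : Prop :=
  ∀ F ∈ Δ, Set.InjOn κ ↑F

/-- The rank-selected subcomplex `Δ_S`. -/
def rankSel {V : Type*} {d : ℕ} (Δ : Set (Finset V)) (κ : V → Fin d) (S : Finset (Fin d)) :
    Set (Finset V) :=
  {F | F ∈ Δ ∧ ∀ v ∈ F, κ v ∈ S}

/-- `Δ` is strongly connected: any two facets are joined by a chain of facets
in which consecutive facets share `d - 1` vertices. -/
def StronglyConnected {V : Type*} [DecidableEq V] (Δ : Set (Finset V)) (d : ℕ) : Prop :=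
  ∀ F F', IsFacet Δ F → IsFacet Δ F' →
    Relation.ReflTransGen
      (fun A B => IsFacet Δ A ∧ IsFacet Δ B ∧ (A ∩ B).card = d - 1) F F'

/-! Induction on `d`. Two facets through a common vertex `v` are, after removing `v`, facets
of the link of `v`, which again satisfies the hypotheses with `d - 1` in place of `d`; a chain
there lifts to a chain in `Δ` by adding `v` back. Connectivity of `Δ` = `lk ∅` then joins
arbitrary facets by a sequence of facets, consecutive ones sharing a vertex. For `d ≤ 1`
distinct facets are disjoint, so any two are adjacent. -/

open Relation

section

variable {V : Type*} {Δ : Set (Finset V)}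

theorem exists_isFacet_superset [Finite V] {G : Finset V} (hG : G ∈ Δ) :
    ∃ H, IsFacet Δ H ∧ G ⊆ H := by
  obtain ⟨H, ⟨hH, hGH⟩, hmax⟩ := Set.Finite.exists_maximalFor Finset.card
    {H | H ∈ Δ ∧ G ⊆ H} (Set.toFinite _) ⟨G, hG, subset_rfl⟩
  refine ⟨H, ⟨hH, fun K hK hHK => ?_⟩, hGH⟩
  exact (Finset.eq_of_subset_of_card_le hHK
    (hmax ⟨hK, hGH.trans hHK⟩ (Finset.card_le_card hHK))).symm

variable [DecidableEq V]

def FacetAdj (Δ : Set (Finset V)) (k : ℕ) (A B : Finset V) : Prop :=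
  IsFacet Δ A ∧ IsFacet Δ B ∧ (A ∩ B).card = k

theorem IsFacet.card_inter_lt {F F' : Finset V} (hF : IsFacet Δ F) (hF' : IsFacet Δ F')
    (hne : F ≠ F') : (F ∩ F').card < F.card := by
  refine Finset.card_lt_card (Finset.ssubset_iff_subset_ne.2 ⟨Finset.inter_subset_left, ?_⟩)
  intro h
  exact hne (hF.2 F' hF'.1 (Finset.inter_eq_left.1 h)).symm

theorem stronglyConnected_of_isPure_of_le_one {d : ℕ} (hpure : IsPure Δ d)
    (hd : d ≤ 1) : StronglyConnected Δ d := by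
  intro F F' hF hF'
  rcases eq_or_ne F F' with rfl | hne
  · exact .refl
  · have := hF.card_inter_lt hF' hne
    rw [hpure F hF] at this
    exact .single ⟨hF, hF', by omega⟩

@[simp]
theorem link_empty (Δ : Set (Finset V)) : link Δ ∅ = Δ := by
  ext G
  simp [link]

theorem IsLowerSet.link (hΔ : IsLowerSet Δ) (G : Finset V) : IsLowerSet (link Δ G) :=
  fun _ _ hBA ⟨hA, hGA, hGAΔ⟩ =>
    ⟨hΔ hBA hA, hGA.mono_right hBA, hΔ (Finset.union_subset_union_right hBA) hGAΔ⟩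

theorem link_link (hΔ : IsLowerSet Δ) {G F : Finset V} (hF : F ∈ link Δ G) :
    link (link Δ G) F = link Δ (G ∪ F) := by
  obtain ⟨-, hGF, -⟩ := hF
  ext A
  constructor
  · rintro ⟨⟨hA, hGA, -⟩, hFA, -, -, hGFA⟩
    exact ⟨hA, Finset.disjoint_union_left.2 ⟨hGA, hFA⟩, by rwa [Finset.union_assoc]⟩
  · rintro ⟨hA, hGFA, hGFAΔ⟩
    obtain ⟨hGA, hFA⟩ := Finset.disjoint_union_left.1 hGFA
    rw [Finset.union_assoc] at hGFAΔ
    exact ⟨⟨hA, hGA, hΔ (Finset.union_subset_union_right Finset.subset_union_right) hGFAΔ⟩,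
      hFA, hΔ Finset.subset_union_right hGFAΔ, Finset.disjoint_union_right.2 ⟨hGF, hGA⟩, hGFAΔ⟩

theorem isFacet_link_iff (hΔ : IsLowerSet Δ) {G A : Finset V} (hGA : Disjoint G A) :
    IsFacet (link Δ G) A ↔ IsFacet Δ (G ∪ A) := by
  constructor
  · rintro ⟨⟨-, -, hGAΔ⟩, hmax⟩
    refine ⟨hGAΔ, fun K hK hGAK => ?_⟩
    have hGK : G ∪ (K \ G) = K := Finset.union_sdiff_of_subset (Finset.union_subset_left hGAK)
    have hKG : K \ G ∈ link Δ G :=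
      ⟨hΔ Finset.sdiff_subset hK, Finset.disjoint_sdiff, by rwa [hGK]⟩
    have hAK : A ⊆ K \ G := Finset.subset_sdiff.2 ⟨Finset.union_subset_right hGAK, hGA.symm⟩
    rw [← hGK, hmax _ hKG hAK]
  · rintro ⟨hGAΔ, hmax⟩
    refine ⟨⟨hΔ Finset.subset_union_right hGAΔ, hGA, hGAΔ⟩, fun K ⟨_, hGK, hGKΔ⟩ hAK => ?_⟩
    have := hmax _ hGKΔ (Finset.union_subset_union_right hAK)
    rw [← Finset.union_sdiff_cancel_left hGK, this, Finset.union_sdiff_cancel_left hGA]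

theorem IsPure.link (hΔ : IsLowerSet Δ) {d : ℕ} (hpure : IsPure Δ d) (G : Finset V) :
    IsPure (link Δ G) (d - G.card) := by
  intro A hA
  have hGA : Disjoint G A := hA.1.2.1
  have := hpure _ ((isFacet_link_iff hΔ hGA).1 hA)
  rw [Finset.card_union_of_disjoint hGA] at this
  omega

theorem LinksConn.link (hΔ : IsLowerSet Δ) {d : ℕ} (hconn : LinksConn Δ d) (G : Finset V) :
    LinksConn (link Δ G) (d - G.card) := by
  intro F hF hcard
  rw [link_link hΔ hF]
  refine hconn _ hF.2.2 ?_
  rw [Finset.card_union_of_disjoint hF.2.1]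
  omega

theorem LinksConn.conn (hΔ : IsLowerSet Δ) {d : ℕ} (hconn : LinksConn Δ d) (hd : 1 < d) :
    Conn Δ := by
  by_cases h₀ : ∅ ∈ Δ
  · simpa using hconn ∅ h₀ (by simpa using hd)
  · exact fun v _ hv => absurd (hΔ (Finset.empty_subset _) hv) h₀

theorem FacetAdj.union_of_link (hΔ : IsLowerSet Δ) {G A B : Finset V} {k : ℕ}
    (h : FacetAdj (link Δ G) k A B) : FacetAdj Δ (G.card + k) (G ∪ A) (G ∪ B) := by
  obtain ⟨hA, hB, hAB⟩ := h
  refine ⟨(isFacet_link_iff hΔ hA.1.2.1).1 hA, (isFacet_link_iff hΔ hB.1.2.1).1 hB, ?_⟩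
  rw [← Finset.union_inter_distrib_left,
    Finset.card_union_of_disjoint (hA.1.2.1.mono_right Finset.inter_subset_left), hAB]

theorem stronglyConnected_of_conn [Finite V] {d : ℕ} (hΔ : IsLowerSet Δ)
    (hconn : Conn Δ) (hne : ∀ F, IsFacet Δ F → F.Nonempty)
    (hshare : ∀ v F F', IsFacet Δ F → IsFacet Δ F' → v ∈ F → v ∈ F' →
      ReflTransGen (FacetAdj Δ (d - 1)) F F') :
    StronglyConnected Δ d := by
  intro F F' hF hF'
  obtain ⟨v, hv⟩ := hne F hF
  obtain ⟨v', hv'⟩ := hne F' hF'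
  have hwalk := hconn v v' (hΔ (Finset.singleton_subset_iff.2 hv) hF.1)
    (hΔ (Finset.singleton_subset_iff.2 hv') hF'.1)
  suffices ∀ w, ReflTransGen (fun a b => ({a, b} : Finset V) ∈ Δ) v w →
      ∃ G, IsFacet Δ G ∧ w ∈ G ∧ ReflTransGen (FacetAdj Δ (d - 1)) F G by
    obtain ⟨G, hG, hv'G, hFG⟩ := this v' hwalk
    exact hFG.trans (hshare v' G F' hG hF' hv'G hv')
  intro w hw
  induction hw with
  | refl => exact ⟨F, hF, hv, .refl⟩
  | tail _ hbc ih =>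
    obtain ⟨G, hG, hbG, hFG⟩ := ih
    obtain ⟨H, hH, hbcH⟩ := exists_isFacet_superset hbc
    exact ⟨H, hH, hbcH (by simp), hFG.trans (hshare _ G H hG hH hbG (hbcH (by simp)))⟩

theorem reflTransGen_facetAdj_of_mem (hΔ : IsLowerSet Δ) {d : ℕ} (hd : 1 ≤ d) {v : V}
    (hlink : StronglyConnected (link Δ {v}) d) {F F' : Finset V} (hF : IsFacet Δ F)
    (hF' : IsFacet Δ F') (hv : v ∈ F) (hv' : v ∈ F') : ReflTransGen (FacetAdj Δ d) F F' := by
  have hfacet : ∀ {F}, IsFacet Δ F → v ∈ F → IsFacet (link Δ {v}) (F.erase v) := fun hF hv =>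
    (isFacet_link_iff hΔ (by simp)).2 (by rwa [← Finset.insert_eq, Finset.insert_erase hv])
  have hlift : ReflTransGen (FacetAdj Δ (({v} : Finset V).card + (d - 1)))
      ({v} ∪ F.erase v) ({v} ∪ F'.erase v) :=
    (hlink _ _ (hfacet hF hv) (hfacet hF' hv')).lift _ fun _ _ h => FacetAdj.union_of_link hΔ h
  rwa [← Finset.insert_eq, ← Finset.insert_eq, Finset.insert_erase hv, Finset.insert_erase hv',
    Finset.card_singleton, Nat.add_sub_cancel' hd] at hlift

theorem stronglyConnected_of_isLowerSet [Finite V] {d : ℕ}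
    (hΔ : IsLowerSet Δ) (hpure : IsPure Δ d) (hconn : LinksConn Δ d) :
    StronglyConnected Δ d := by
  induction d generalizing Δ with
  | zero => exact stronglyConnected_of_isPure_of_le_one hpure zero_le_one
  | succ d ih =>
    rcases Nat.eq_zero_or_pos d with rfl | hd
    · exact stronglyConnected_of_isPure_of_le_one hpure le_rfl
    refine stronglyConnected_of_conn hΔ (hconn.conn hΔ (by omega))
      (fun F hF => Finset.card_pos.1 (by rw [hpure F hF]; omega))
      fun v F F' hF hF' hv hv' => reflTransGen_facetAdj_of_mem hΔ hd ?_ hF hF' hv hv'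
    exact ih (hΔ.link {v}) (hpure.link hΔ {v}) (hconn.link hΔ {v})

end

theorem stronglyConnected_of_linksConn_general {V : Type*} [Fintype V] [DecidableEq V] (d : ℕ)
    (Δ : Set (Finset V))
    (hcplx : IsComplex Δ)
    (hI : IsPure Δ d) (hIII : LinksConn Δ d) :
    StronglyConnected Δ d :=
  stronglyConnected_of_isLowerSet (fun _ _ hGF hF => hcplx.1 _ hF _ hGF) hI hIII

/-- A pure `(d-1)`-dimensional simplicial complex, `d ≥ 2`, all of
whose links of faces with fewer than `d - 1` vertices (including the empty face) are
connected, is strongly connected: any two facets are joined by a chain of facets in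
which consecutive facets share `d - 1` vertices. -/
theorem stronglyConnected_of_linksConn {V : Type*} [Fintype V] [DecidableEq V] (d : ℕ)
    (hd : 2 ≤ d) (Δ : Set (Finset V))
    (hcplx : IsComplex Δ) (hdim : HasDim Δ d)
    (hI : IsPure Δ d) (hIII : LinksConn Δ d) :
    StronglyConnected Δ d :=
  stronglyConnected_of_linksConn_general d Δ hcplx hI hIII
end

section
/- Let P be a simplicial poset of rank d ≥ 2 satisfying properties (i)–(iii). Then the order complex Δ(P̄) of P̄ = P ∖ {0̂} is a (d−1)-dimensional simplicial complex satisfying properties (I)–(III): it is pure, it is balanced with the coloring assigning to each vertex σ ∈ P̄ of Δ(P̄) the rank rk(σ), and the link in Δ(P̄) of every chain F with |F| < d−1 is connected. -/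
/-- `P` (a finite poset with least element `⊥`) is a simplicial poset with rank
function `rk`: every lower interval `[⊥, x]` is isomorphic to the Boolean lattice of
subsets of an `rk x`-element set. -/
def IsSimplicialPoset (P : Type*) [PartialOrder P] [OrderBot P] (rk : P → ℕ) : Prop :=
  ∀ x : P, Nonempty (Set.Icc (⊥ : P) x ≃o Finset (Fin (rk x)))

/-- `P` has rank `d`. -/
def PosetRank {P : Type*} (rk : P → ℕ) (d : ℕ) : Prop :=
  (∀ x : P, rk x ≤ d) ∧ ∃ x : P, rk x = d

/-- Property (i): `P` is pure, i.e. every facet (maximal element) has rank `d`. -/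
def PosetPure {P : Type*} [PartialOrder P] (rk : P → ℕ) (d : ℕ) : Prop :=
  ∀ x : P, IsMax x → rk x = d

/-- Property (ii): `P` is balanced with respect to the coloring `κ` of its vertices
by `d` colors: distinct vertices lying below a common facet receive distinct colors. -/
def PosetBalanced {P : Type*} [PartialOrder P] {d : ℕ} (rk : P → ℕ) (κ : P → Fin d) :
    Prop :=
  ∀ σ : P, IsMax σ → ∀ v w : P, rk v = 1 → rk w = 1 → v ≤ σ → w ≤ σ → v ≠ w → κ v ≠ κ w

/-- The link `lk_P τ = {σ ∈ P : σ ≥ τ}` is connected: any two of its vertices (the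
elements of rank `rk τ + 1` above `τ`) are joined by a path of rank-2 elements of the
link (the elements of rank `rk τ + 2` above `τ`). -/
def ConnAbove {P : Type*} [PartialOrder P] (rk : P → ℕ) (τ : P) : Prop :=
  ∀ v w : P, τ < v → rk v = rk τ + 1 → τ < w → rk w = rk τ + 1 →
    Relation.ReflTransGen
      (fun a b => τ < a ∧ τ < b ∧ rk a = rk τ + 1 ∧ rk b = rk τ + 1 ∧
        ∃ e : P, a ≤ e ∧ b ≤ e ∧ rk e = rk τ + 2) v w

/-- Property (iii): the link of every face of rank `< d - 1` (including `⊥`, so in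
particular `P` itself) is connected. -/
def PosetLinksConn {P : Type*} [PartialOrder P] (rk : P → ℕ) (d : ℕ) : Prop :=
  ∀ σ : P, rk σ < d - 1 → ConnAbove rk σ


/-!
Ranks strictly increase along chains, so a chain of `P̄` has at most `d` elements. A rank `j`
missing from a chain can always be inserted: below the next element of the chain the interval is
Boolean, and above the top of the chain one climbs to a maximal element, of rank `d` by (i).
Hence every maximal chain has exactly `d` elements.

The link of a chain `F` consists of the elements lying strictly inside one of the gaps of `F`:
below its first element, between two consecutive elements, or above its last one. Vertices in
different gaps are comparable, so the link is connected unless all its vertices lie in a single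
gap. In that case every missing rank lies in the gap, and counting ranks shows that the gap is either an open
interval `(a, b)` with `rk b ≥ rk a + 3`, or the upper set `P_{>a}` with `rk a < d - 1`. In both
cases every vertex of the gap lies above an element of rank `rk a + 1` of the gap, and two such
elements are joined through elements of rank `rk a + 2`: inside the Boolean interval `[a, b]` in
the first case, and by the connectivity (iii) of `lk_P a` in the second.
-/

open Finset Relation

section General

variable {α : Type*} [PartialOrder α]

theorem IsChain.exists_greatest_finset {s : Finset α} (hs : IsChain (· ≤ ·) (s : Set α))
    {p : α → Prop} (h : ∃ x ∈ s, p x) : ∃ m ∈ s, p m ∧ ∀ x ∈ s, p x → x ≤ m := by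
  classical
  obtain ⟨m, hm⟩ := (s.filter p).exists_maximal (filter_nonempty_iff.2 h)
  obtain ⟨hms, hmp⟩ := mem_filter.1 hm.1
  exact ⟨m, hms, hmp, fun x hx hpx =>
    (hs.total hx hms).elim id fun hmx => hm.2 (mem_filter.2 ⟨hx, hpx⟩) hmx⟩

theorem IsChain.exists_least_finset {s : Finset α} (hs : IsChain (· ≤ ·) (s : Set α))
    {p : α → Prop} (h : ∃ x ∈ s, p x) : ∃ m ∈ s, p m ∧ ∀ x ∈ s, p x → m ≤ x := by
  classical
  obtain ⟨m, hm⟩ := (s.filter p).exists_minimal (filter_nonempty_iff.2 h)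
  obtain ⟨hms, hmp⟩ := mem_filter.1 hm.1
  exact ⟨m, hms, hmp, fun x hx hpx =>
    (hs.total hms hx).elim id fun hxm => hm.2 (mem_filter.2 ⟨hx, hpx⟩) hxm⟩

theorem IsChain.injOn_of_strictMono {β : Type*} [Preorder β] {f : α → β} (hf : StrictMono f)
    {s : Set α} (hs : IsChain (· ≤ ·) s) : Set.InjOn f s := by
  intro x hx y hy hxy
  by_contra hne
  rcases hs hx hy hne with h | h
  · exact (hf (h.lt_of_ne hne)).ne hxy
  · exact (hf (h.lt_of_ne (Ne.symm hne))).ne hxy.symm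

theorem le_card_add_card_of_forall_mem {ι : Type*} {s : Finset ι} {f : ι → ℕ} {T : Finset ℕ}
    {d : ℕ} (h : ∀ j ∈ Icc 1 d, (∀ x ∈ s, f x ≠ j) → j ∈ T) : d ≤ s.card + T.card := by
  classical
  have hsub : Icc 1 d ⊆ s.image f ∪ T := by
    intro j hj
    by_cases hjs : ∀ x ∈ s, f x ≠ j
    · exact mem_union_right _ (h j hj hjs)
    · push Not at hjs
      obtain ⟨x, hx, rfl⟩ := hjs
      exact mem_union_left _ (mem_image_of_mem f hx)
  have := (card_le_card hsub).trans
    ((card_union_le _ _).trans (Nat.add_le_add_right card_image_le _))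
  simpa using this

theorem exists_isFacet {V : Type*} [Finite V] {Δ : Set (Finset V)} (hΔ : Δ.Nonempty) :
    ∃ F, IsFacet Δ F := by
  obtain ⟨F, hF⟩ := Δ.toFinite.exists_maximal hΔ
  exact ⟨F, hF.1, fun G hG hFG => le_antisymm (hF.2 hG hFG) hFG⟩

theorem Relation.ReflTransGen.subtype {β : Type*} {p : β → Prop} {r : β → β → Prop}
    (hr : ∀ x y, r x y → p y) {u : Subtype p} {c : β} (h : ReflTransGen r u c) :
    ∃ hc : p c, ReflTransGen (fun x y : Subtype p => r x y) u ⟨c, hc⟩ := by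
  induction h with
  | refl => exact ⟨u.2, .refl⟩
  | tail _ hbc ih =>
    obtain ⟨_, ih⟩ := ih
    exact ⟨hr _ _ hbc, ih.tail hbc⟩

end General

section ChainComplex

def chainComplex (α : Type*) [LE α] : Set (Finset α) :=
  {F | IsChain (· ≤ ·) (F : Set α)}

variable {α : Type*} [PartialOrder α] [DecidableEq α] {F : Finset α}

theorem isComplex_chainComplex : IsComplex (chainComplex α) :=
  ⟨fun _ hF _ hGF => IsChain.mono (coe_subset.2 hGF) hF, fun _ => by simp [chainComplex]⟩

theorem mem_link_chainComplex_iff (hF : F ∈ chainComplex α) {G : Finset α} :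
    G ∈ link (chainComplex α) F ↔ G ∈ chainComplex α ∧ ∀ x ∈ F, ∀ y ∈ G, x < y ∨ y < x := by
  simp only [link, chainComplex, Set.mem_ofPred_eq, coe_union, isChain_union]
  constructor
  · rintro ⟨hG, hdisj, -, -, hcomp⟩
    refine ⟨hG, fun x hx y hy => ?_⟩
    have hxy : x ≠ y := fun h => disjoint_left.1 hdisj hx (h ▸ hy)
    exact (hcomp x hx y hy hxy).imp (·.lt_of_ne hxy) (·.lt_of_ne hxy.symm)
  · rintro ⟨hG, hlt⟩
    refine ⟨hG, disjoint_left.2 fun x hx hxG => ?_, hF, hG,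
      fun x hx y hy _ => (hlt x hx y hy).imp le_of_lt le_of_lt⟩
    exact (hlt x hx x hxG).elim (lt_irrefl x) (lt_irrefl x)

theorem singleton_mem_link_chainComplex_iff (hF : F ∈ chainComplex α) {z : α} :
    {z} ∈ link (chainComplex α) F ↔ ∀ x ∈ F, x < z ∨ z < x := by
  rw [mem_link_chainComplex_iff hF]
  simp [chainComplex]

theorem pair_mem_link_chainComplex (hF : F ∈ chainComplex α) {v w : α}
    (hv : {v} ∈ link (chainComplex α) F) (hw : {w} ∈ link (chainComplex α) F)
    (hvw : v ≤ w ∨ w ≤ v) : {v, w} ∈ link (chainComplex α) F := by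
  rw [singleton_mem_link_chainComplex_iff hF] at hv hw
  refine (mem_link_chainComplex_iff hF).2 ⟨?_, fun x hx y hy => ?_⟩
  · rw [chainComplex, Set.mem_ofPred_eq, coe_pair]
    exact IsChain.singleton.insert fun _ hb _ => (Set.mem_singleton_iff.1 hb) ▸ hvw
  · rcases mem_insert.1 hy with rfl | hy
    · exact hv x hx
    · exact (mem_singleton.1 hy) ▸ hw x hx

theorem le_of_singleton_mem_link_chainComplex (hF : F ∈ chainComplex α) {x u v : α}
    (hx : x ∈ F) (hv : {v} ∈ link (chainComplex α) F) (hxu : x < u) (hxv : ¬x < v) : v ≤ u :=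
  ((((singleton_mem_link_chainComplex_iff hF).1 hv) x hx).resolve_left hxv).trans hxu |>.le

end ChainComplex

def ComparableIn {α : Type*} [LE α] (S : Set α) (x y : α) : Prop :=
  x ∈ S ∧ y ∈ S ∧ (x ≤ y ∨ y ≤ x)

namespace IsSimplicialPoset

variable {P : Type*} [PartialOrder P] [OrderBot P] {rk : P → ℕ} {d : ℕ}

theorem nat_card_Icc_bot (hP : IsSimplicialPoset P rk) (x : P) :
    Nat.card (Set.Icc ⊥ x) = 2 ^ rk x := by
  obtain ⟨f⟩ := hP x
  rw [Nat.card_congr f.toEquiv, Nat.card_eq_fintype_card, Fintype.card_finset, Fintype.card_fin]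

theorem rk_bot (hP : IsSimplicialPoset P rk) : rk ⊥ = 0 := by
  have h := hP.nat_card_Icc_bot ⊥
  rw [Set.Icc_self, Nat.card_unique] at h
  exact (Nat.pow_eq_one.1 h.symm).resolve_left (by norm_num)

theorem rk_eq_card (hP : IsSimplicialPoset P rk) {x : P}
    (f : Set.Icc ⊥ x ≃o Finset (Fin (rk x))) (y : Set.Icc ⊥ x) : rk y = (f y).card := by
  let e : Set.Icc ⊥ (y : P) ≃ Set.Iic y :=
    { toFun := fun z => ⟨⟨z, bot_le, z.2.2.trans y.2.2⟩, z.2.2⟩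
      invFun := fun z => ⟨z.1, bot_le, z.2⟩
      left_inv := fun _ => rfl
      right_inv := fun _ => rfl }
  apply Nat.pow_right_injective le_rfl
  show 2 ^ rk y = 2 ^ (f y).card
  rw [← hP.nat_card_Icc_bot, Nat.card_congr (e.trans (f.toEquiv.subtypeEquiv
    (q := (· ∈ Set.Iic (f y))) fun _ => f.le_iff_le.symm)),
    Nat.card_eq_fintype_card, Fintype.card_Iic, card_Iic_finset]

theorem strictMono (hP : IsSimplicialPoset P rk) : StrictMono rk := by
  intro x y hxy
  obtain ⟨f⟩ := hP y
  calc rk x = (f ⟨x, bot_le, hxy.le⟩).card := hP.rk_eq_card f ⟨x, bot_le, hxy.le⟩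
    _ < (f ⟨y, bot_le, le_rfl⟩).card := card_lt_card (f.strictMono hxy)
    _ = rk y := (hP.rk_eq_card f ⟨y, bot_le, le_rfl⟩).symm

theorem one_le_rk (hP : IsSimplicialPoset P rk) {x : P} (hx : x ≠ ⊥) : 1 ≤ rk x :=
  (hP.rk_bot ▸ hP.strictMono (bot_lt_iff_ne_bot.2 hx) : 0 < rk x)

theorem exists_rk_eq (hP : IsSimplicialPoset P rk) {a b : P} (hab : a ≤ b) {j : ℕ}
    (haj : rk a ≤ j) (hjb : j ≤ rk b) : ∃ z, a ≤ z ∧ z ≤ b ∧ rk z = j := by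
  obtain ⟨f⟩ := hP b
  let a' : Set.Icc ⊥ b := ⟨a, bot_le, hab⟩
  let b' : Set.Icc ⊥ b := ⟨b, bot_le, le_rfl⟩
  obtain ⟨u, hau, -, hu⟩ := exists_subsuperset_card_eq (f.monotone (show a' ≤ b' from hab))
    (hP.rk_eq_card f a' ▸ haj) (hP.rk_eq_card f b' ▸ hjb)
  refine ⟨f.symm u, f.le_symm_apply.2 hau, (f.symm u).2.2, ?_⟩
  rw [hP.rk_eq_card f, f.apply_symm_apply, hu]

theorem exists_atom_le (hP : IsSimplicialPoset P rk) {a u : P} (hau : a < u) :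
    ∃ z, a < z ∧ z ≤ u ∧ rk z = rk a + 1 := by
  obtain ⟨z, haz, hzu, hz⟩ := hP.exists_rk_eq hau.le (Nat.le_succ _) (hP.strictMono hau)
  exact ⟨z, haz.lt_of_ne (by rintro rfl; omega), hzu, hz⟩

theorem exists_le_rk_add_le (hP : IsSimplicialPoset P rk) {a b z₁ z₂ : P} (h₁ : a ≤ z₁)
    (h₂ : a ≤ z₂) (hz₁ : z₁ ≤ b) (hz₂ : z₂ ≤ b) :
    ∃ e, z₁ ≤ e ∧ z₂ ≤ e ∧ e ≤ b ∧ rk e + rk a ≤ rk z₁ + rk z₂ := by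
  obtain ⟨f⟩ := hP b
  let A : Set.Icc ⊥ b := ⟨a, bot_le, h₁.trans hz₁⟩
  let Z₁ : Set.Icc ⊥ b := ⟨z₁, bot_le, hz₁⟩
  let Z₂ : Set.Icc ⊥ b := ⟨z₂, bot_le, hz₂⟩
  have hA : f A ⊆ f Z₁ ∩ f Z₂ :=
    subset_inter (f.monotone (show A ≤ Z₁ from h₁)) (f.monotone (show A ≤ Z₂ from h₂))
  refine ⟨f.symm (f Z₁ ∪ f Z₂), (f.le_symm_apply (x := Z₁)).2 subset_union_left,
    (f.le_symm_apply (x := Z₂)).2 subset_union_right, (f.symm _).2.2, ?_⟩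
  have := card_union_add_card_inter (f Z₁) (f Z₂)
  have := card_le_card hA
  rw [hP.rk_eq_card f, f.apply_symm_apply, hP.rk_eq_card f A, hP.rk_eq_card f Z₁,
    hP.rk_eq_card f Z₂]
  omega

theorem reflTransGen_comparableIn_of_atoms (hP : IsSimplicialPoset P rk) {a : P} {S : Set P}
    (hS_gt : ∀ z ∈ S, a < z) (hS_down : ∀ z u, a < z → z ≤ u → u ∈ S → z ∈ S)
    (hatoms : ∀ z₁ ∈ S, ∀ z₂ ∈ S, rk z₁ = rk a + 1 → rk z₂ = rk a + 1 →
      ReflTransGen (ComparableIn S) z₁ z₂)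
    {u w : P} (hu : u ∈ S) (hw : w ∈ S) : ReflTransGen (ComparableIn S) u w := by
  obtain ⟨z₁, haz₁, hz₁u, hz₁⟩ := hP.exists_atom_le (hS_gt u hu)
  obtain ⟨z₂, haz₂, hz₂w, hz₂⟩ := hP.exists_atom_le (hS_gt w hw)
  have hz₁S := hS_down _ _ haz₁ hz₁u hu
  have hz₂S := hS_down _ _ haz₂ hz₂w hw
  exact (ReflTransGen.single ⟨hu, hz₁S, Or.inr hz₁u⟩).trans
    ((hatoms z₁ hz₁S z₂ hz₂S hz₁ hz₂).tail ⟨hz₂S, hw, Or.inl hz₂w⟩)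

theorem reflTransGen_comparableIn_Ioo (hP : IsSimplicialPoset P rk) {a b u w : P}
    (hab : rk a + 3 ≤ rk b) (hu : u ∈ Set.Ioo a b) (hw : w ∈ Set.Ioo a b) :
    ReflTransGen (ComparableIn (Set.Ioo a b)) u w := by
  refine hP.reflTransGen_comparableIn_of_atoms (S := Set.Ioo a b) (fun z hz => hz.1)
    (fun z u haz hzu hu => ⟨haz, hzu.trans_lt hu.2⟩) ?_ hu hw
  intro z₁ hz₁ z₂ hz₂ hr₁ hr₂
  obtain ⟨e, h₁e, h₂e, heb, hre⟩ := hP.exists_le_rk_add_le hz₁.1.le hz₂.1.le hz₁.2.le hz₂.2.le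
  have he : e ∈ Set.Ioo a b := ⟨hz₁.1.trans_le h₁e, heb.lt_of_ne (by rintro rfl; omega)⟩
  exact (ReflTransGen.single ⟨hz₁, he, Or.inl h₁e⟩).tail ⟨he, hz₂, Or.inr h₂e⟩

theorem reflTransGen_comparableIn_Ioi (hP : IsSimplicialPoset P rk) {a u w : P}
    (ha : ConnAbove rk a) (hu : u ∈ Set.Ioi a) (hw : w ∈ Set.Ioi a) :
    ReflTransGen (ComparableIn (Set.Ioi a)) u w := by
  refine hP.reflTransGen_comparableIn_of_atoms (S := Set.Ioi a) (fun z hz => hz)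
    (fun z _ haz _ _ => haz) ?_ hu hw
  intro z₁ hz₁ z₂ hz₂ hr₁ hr₂
  refine reflTransGen_closed ?_ z₁ z₂ (ha z₁ z₂ hz₁ hr₁ hz₂ hr₂)
  rintro x y ⟨hx, hy, -, -, e, hxe, hye, -⟩
  have he : e ∈ Set.Ioi a := hx.trans_le hxe
  exact (ReflTransGen.single ⟨hx, he, Or.inl hxe⟩).tail ⟨he, hy, Or.inr hye⟩

local notation "V" => {x : P // x ≠ ⊥}

theorem injOn_rk_of_mem_chainComplex (hP : IsSimplicialPoset P rk) {F : Finset V}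
    (hF : F ∈ chainComplex V) : Set.InjOn (fun σ : V => rk σ.1) F :=
  IsChain.injOn_of_strictMono (hP.strictMono.comp (Subtype.strictMono_coe _)) hF

theorem card_le_of_mem_chainComplex (hP : IsSimplicialPoset P rk) (hrk : ∀ x, rk x ≤ d)
    {F : Finset V} (hF : F ∈ chainComplex V) : F.card ≤ d :=
  calc F.card = (F.image fun σ : V => rk σ.1).card :=
        (card_image_of_injOn (hP.injOn_rk_of_mem_chainComplex hF)).symm
    _ ≤ (Icc 1 d).card := card_le_card fun j hj => by
        obtain ⟨σ, -, rfl⟩ := mem_image.1 hj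
        exact mem_Icc.2 ⟨hP.one_le_rk σ.2, hrk σ⟩
    _ = d := by simp

variable [DecidableEq P]

theorem exists_rk_eq_singleton_mem_link [Finite P] (hP : IsSimplicialPoset P rk)
    (hi : PosetPure rk d) {F : Finset V} (hF : F ∈ chainComplex V) {j : ℕ} (hj : j ∈ Icc 1 d)
    (hjF : ∀ x ∈ F, rk x.1 ≠ j) : ∃ z : V, rk z.1 = j ∧ {z} ∈ link (chainComplex V) F := by
  have hF' : IsChain (· ≤ ·) (F : Set V) := hF
  obtain ⟨hj₁, hjd⟩ := mem_Icc.1 hj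
  obtain ⟨a, haj, ha⟩ : ∃ a : P, rk a < j ∧
      ∀ x ∈ F, (rk x.1 < j → x.1 ≤ a) ∧ (j < rk x.1 → a ≤ x.1) := by
    by_cases h : ∃ x ∈ F, rk x.1 < j
    · obtain ⟨m, hmF, hmj, hm⟩ := hF'.exists_greatest_finset h
      refine ⟨m.1, hmj, fun x hx => ⟨hm x hx, fun hjx => ?_⟩⟩
      exact (hF'.total hmF hx).resolve_right fun hxm =>
        (hP.strictMono.monotone hxm).not_gt (hmj.trans hjx)
    · exact ⟨⊥, hP.rk_bot ▸ hj₁, fun x hx => ⟨fun hxj => (h ⟨x, hx, hxj⟩).elim, fun _ => bot_le⟩⟩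
  obtain ⟨b, hab, hjb, hb⟩ : ∃ b : P, a ≤ b ∧ j ≤ rk b ∧ ∀ x ∈ F, j < rk x.1 → b ≤ x.1 := by
    by_cases h : ∃ x ∈ F, j < rk x.1
    · obtain ⟨m, hmF, hjm, hm⟩ := hF'.exists_least_finset h
      exact ⟨m.1, (ha m hmF).2 hjm, hjm.le, hm⟩
    · obtain ⟨m, ham, hm⟩ := Finite.exists_le_maximal (p := fun _ : P => True) (a := a) trivial
      exact ⟨m, ham, hi m (fun y hy => hm.2 trivial hy) ▸ hjd,
        fun x hx hjx => (h ⟨x, hx, hjx⟩).elim⟩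
  obtain ⟨z, haz, hzb, hz⟩ := hP.exists_rk_eq hab haj.le hjb
  have hz_ne : z ≠ ⊥ := fun h => by rw [h, hP.rk_bot] at hz; omega
  refine ⟨⟨z, hz_ne⟩, hz, (singleton_mem_link_chainComplex_iff hF).2 fun x hx => ?_⟩
  rcases (hjF x hx).lt_or_gt with hxj | hjx
  · exact Or.inl ((((ha x hx).1 hxj).trans haz).lt_of_ne (ne_of_apply_ne rk (by omega)))
  · exact Or.inr ((hzb.trans (hb x hx hjx)).lt_of_ne (ne_of_apply_ne rk (by omega)))

theorem isPure_chainComplex [Finite P] (hP : IsSimplicialPoset P rk) (hrk : ∀ x, rk x ≤ d)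
    (hi : PosetPure rk d) : IsPure (chainComplex V) d := by
  rintro F ⟨hF, hmax⟩
  have hd : d ≤ F.card + (∅ : Finset ℕ).card := le_card_add_card_of_forall_mem fun j hj hjF => by
    obtain ⟨z, -, hz⟩ := hP.exists_rk_eq_singleton_mem_link hi hF hj hjF
    have hzF : z ∈ F := hmax _ hz.2.2 subset_union_left ▸ mem_union_right _ (mem_singleton_self z)
    exact (disjoint_singleton_right.1 hz.2.1 hzF).elim
  have := hP.card_le_of_mem_chainComplex hrk hF
  simp only [card_empty, add_zero] at hd
  omega

theorem reflTransGen_link_of_comparableIn {F : Finset V} (hF : F ∈ chainComplex V) {S : Set P}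
    (hS : ∀ z : V, z.1 ∈ S → {z} ∈ link (chainComplex V) F) (hS_bot : ⊥ ∉ S) {v w : V}
    (h : ReflTransGen (ComparableIn S) v w) :
    ReflTransGen (fun a b : V => {a, b} ∈ link (chainComplex V) F) v w := by
  obtain ⟨_, h⟩ := h.subtype fun _ _ hxy => ne_of_mem_of_not_mem hxy.2.1 hS_bot
  exact ReflTransGen.mono (fun a b ⟨ha, hb, hab⟩ =>
    pair_mem_link_chainComplex hF (hS a ha) (hS b hb) hab) _ _ h

theorem reflTransGen_link_of_forall_lt_iff [Finite P] (hP : IsSimplicialPoset P rk)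
    (hi : PosetPure rk d) (hiii : PosetLinksConn rk d) {F : Finset V} (hF : F ∈ chainComplex V)
    (hcard : F.card < d - 1) {v w : V} (hv : {v} ∈ link (chainComplex V) F)
    (hw : {w} ∈ link (chainComplex V) F)
    (hgap : ∀ u : V, {u} ∈ link (chainComplex V) F → ∀ x ∈ F, x < u ↔ x < v) :
    ReflTransGen (fun a b : V => {a, b} ∈ link (chainComplex V) F) v w := by
  have hlink (z : V) := singleton_mem_link_chainComplex_iff hF (z := z)
  have hF' : IsChain (· ≤ ·) (F : Set V) := hF
  -- `a` is the greatest element of `F` below `v`, or `⊥`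
  obtain ⟨a, hle_a, ha_lt⟩ : ∃ a : P, (∀ x ∈ F, x < v → x.1 ≤ a) ∧
      ∀ u : V, {u} ∈ link (chainComplex V) F → a < u.1 := by
    by_cases h : ∃ x ∈ F, x < v
    · obtain ⟨m, hmF, hmv, hm⟩ := hF'.exists_greatest_finset h
      exact ⟨m.1, hm, fun u hu => (hgap u hu m hmF).2 hmv⟩
    · exact ⟨⊥, fun x hx hxv => (h ⟨x, hx, hxv⟩).elim, fun u _ => bot_lt_iff_ne_bot.2 u.2⟩
  by_cases hup : ∃ x ∈ F, v < x
  · obtain ⟨b, hbF, hvb, hb⟩ := hF'.exists_least_finset hup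
    have hlt_b (u : V) (hu : {u} ∈ link (chainComplex V) F) : u.1 < b.1 :=
      ((hlink u).1 hu b hbF).resolve_left fun hbu => hvb.not_gt ((hgap u hu b hbF).1 hbu)
    have hab : rk a + 3 ≤ rk b.1 := by
      have := le_card_add_card_of_forall_mem (T := Ioo (rk a) (rk b.1)) fun j hj hjF => by
        obtain ⟨u, rfl, hu⟩ := hP.exists_rk_eq_singleton_mem_link hi hF hj hjF
        exact mem_Ioo.2 ⟨hP.strictMono (ha_lt u hu), hP.strictMono (hlt_b u hu)⟩
      simp only [Nat.card_Ioo] at this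
      omega
    refine reflTransGen_link_of_comparableIn hF (S := Set.Ioo a b.1)
      (fun z hz => (hlink z).2 fun x hx => ?_) (fun h => not_lt_bot h.1)
      (hP.reflTransGen_comparableIn_Ioo hab ⟨ha_lt v hv, hlt_b v hv⟩ ⟨ha_lt w hw, hlt_b w hw⟩)
    exact ((hlink v).1 hv x hx).imp (fun hxv => (hle_a x hx hxv).trans_lt hz.1)
      fun hvx => hz.2.trans_le (hb x hx hvx)
  · push Not at hup
    have ha : rk a < d - 1 := by
      have := le_card_add_card_of_forall_mem (T := Ioo (rk a) (d + 1)) fun j hj hjF => by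
        obtain ⟨u, rfl, hu⟩ := hP.exists_rk_eq_singleton_mem_link hi hF hj hjF
        exact mem_Ioo.2 ⟨hP.strictMono (ha_lt u hu), Nat.lt_succ_of_le (mem_Icc.1 hj).2⟩
      simp only [Nat.card_Ioo] at this
      omega
    refine reflTransGen_link_of_comparableIn hF (S := Set.Ioi a)
      (fun z hz => (hlink z).2 fun x hx => Or.inl ?_) not_lt_bot
      (hP.reflTransGen_comparableIn_Ioi (hiii a ha) (ha_lt v hv) (ha_lt w hw))
    exact (hle_a x hx (((hlink v).1 hv x hx).resolve_right (hup x hx))).trans_lt hz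

theorem linksConn_chainComplex [Finite P] (hP : IsSimplicialPoset P rk) (hi : PosetPure rk d)
    (hiii : PosetLinksConn rk d) : LinksConn (chainComplex V) d := by
  intro F hF hcard v w hv hw
  by_cases hvw : v ≤ w ∨ w ≤ v
  · exact .single (pair_mem_link_chainComplex hF hv hw hvw)
  by_cases hgap : ∀ u : V, {u} ∈ link (chainComplex V) F → ∀ x ∈ F, x < u ↔ x < v
  · exact hP.reflTransGen_link_of_forall_lt_iff hi hiii hF hcard hv hw hgap
  push Not at hgap
  obtain ⟨u, hu, x, hx, hxu⟩ := hgap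
  have hle {p q : V} (hq : {q} ∈ link (chainComplex V) F) (hxp : x < p) (hxq : ¬x < q) : q ≤ p :=
    le_of_singleton_mem_link_chainComplex hF hx hq hxp hxq
  rcases hxu with ⟨hxu, hxv⟩ | ⟨hxu, hxv⟩
  · have hxw : ¬x < w := fun hxw => hvw (Or.inl (hle hv hxw hxv))
    exact .tail (.single (pair_mem_link_chainComplex hF hv hu (Or.inl (hle hv hxu hxv))))
      (pair_mem_link_chainComplex hF hu hw (Or.inr (hle hw hxu hxw)))
  · have hxw : x < w := by_contra fun hxw => hvw (Or.inr (hle hw hxv hxw))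
    exact .tail (.single (pair_mem_link_chainComplex hF hv hu (Or.inr (hle hu hxv hxu))))
      (pair_mem_link_chainComplex hF hu hw (Or.inl (hle hu hxw hxu)))

end IsSimplicialPoset

theorem orderComplex_satisfies_I_II_III_general {P : Type*} [Fintype P] [DecidableEq P]
    [PartialOrder P] [OrderBot P] (rk : P → ℕ) (d : ℕ)
    (hSP : IsSimplicialPoset P rk) (hrk : PosetRank rk d)
    (hi : PosetPure rk d) (hiii : PosetLinksConn rk d) :
    ∀ Δ : Set (Finset {x : P // x ≠ ⊥}),
      Δ = {F : Finset {x : P // x ≠ ⊥} | IsChain (· ≤ ·) (↑F : Set {x : P // x ≠ ⊥})} →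
      IsComplex Δ ∧ HasDim Δ d ∧
      -- (I): the order complex is pure
      IsPure Δ d ∧
      -- (II): the order complex is balanced with coloring `σ ↦ rk σ`
      (∀ F ∈ Δ, Set.InjOn (fun σ : {x : P // x ≠ ⊥} => rk σ.1) ↑F) ∧
      (∀ σ : {x : P // x ≠ ⊥}, 1 ≤ rk σ.1 ∧ rk σ.1 ≤ d) ∧
      -- (III): links of faces with fewer than `d - 1` vertices are connected
      LinksConn Δ d := by
  rintro Δ rfl
  have hpure := hSP.isPure_chainComplex hrk.1 hi
  obtain ⟨F, hF⟩ := exists_isFacet (Δ := chainComplex {x : P // x ≠ ⊥}) ⟨∅, by simp [chainComplex]⟩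
  exact ⟨isComplex_chainComplex,
    ⟨fun _ hG => hSP.card_le_of_mem_chainComplex hrk.1 hG, F, hF.1, hpure F hF⟩,
    hpure,
    fun _ hG => hSP.injOn_rk_of_mem_chainComplex hG,
    fun σ => ⟨hSP.one_le_rk σ.2, hrk.1 σ.1⟩,
    hSP.linksConn_chainComplex hi hiii⟩

/-- If `P` is a simplicial poset of rank `d ≥ 2` satisfying
properties (i)–(iii), then the order complex `Δ(P̄)` of `P̄ = P \ {⊥}` (the simplicial
complex whose vertices are the elements of `P̄` and whose faces are the chains of `P̄`)
is a `(d-1)`-dimensional simplicial complex satisfying properties (I)–(III): it is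
pure, it is balanced with the coloring assigning to each vertex `σ` its rank `rk σ`
(a color in `{1, …, d}`), and the link of every chain with fewer than `d - 1` elements
is connected. -/
theorem orderComplex_satisfies_I_II_III {P : Type*} [Fintype P] [DecidableEq P]
    [PartialOrder P] [OrderBot P] (rk : P → ℕ) (d : ℕ) (hd : 2 ≤ d) (κ : P → Fin d)
    (hSP : IsSimplicialPoset P rk) (hrk : PosetRank rk d)
    (hi : PosetPure rk d) (hii : PosetBalanced rk κ) (hiii : PosetLinksConn rk d) :
    ∀ Δ : Set (Finset {x : P // x ≠ ⊥}),
      Δ = {F : Finset {x : P // x ≠ ⊥} | IsChain (· ≤ ·) (↑F : Set {x : P // x ≠ ⊥})} →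
      IsComplex Δ ∧ HasDim Δ d ∧
      -- (I): the order complex is pure
      IsPure Δ d ∧
      -- (II): the order complex is balanced with coloring `σ ↦ rk σ`
      (∀ F ∈ Δ, Set.InjOn (fun σ : {x : P // x ≠ ⊥} => rk σ.1) ↑F) ∧
      (∀ σ : {x : P // x ≠ ⊥}, 1 ≤ rk σ.1 ∧ rk σ.1 ≤ d) ∧
      -- (III): links of faces with fewer than `d - 1` vertices are connected
      LinksConn Δ d :=
  orderComplex_satisfies_I_II_III_general rk d hSP hrk hi hiii
end
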